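/- arXiv:1907.00742 — 3 statements merged into one kernel-verified Lean document; each statement's English description precedes it below -/
import Mathlib

section
/- Suppose that every game of length ω³ on ℕ with open payoff (i.e., payoff A ⊆ ((ℕ×ℕ×ℕ) → ℕ) open in the product topology) is determined. Then every game of length ω² on ℕ whose payoff belongs to ⅁ℝ_{ω²}Σ⁰₁ (as a subset of the space (ℕ×ℕ) → ℕ with the product topology) is determined. -/
noncomputable section

/-- The Baire space `ℕ → ℕ`, denoted ℝ in the paper. -/
abbrev Baire : Type := ℕ → ℕ

/-- The finite sequence `(x 0, …, x (m-1))`. -/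
def resSeq {α : Type*} (x : ℕ → α) (m : ℕ) : List α := List.ofFn fun i : Fin m => x i

/-- `σ` is a winning strategy for Player I in the length-ω game on `X` with payoff `A`. -/
def WinStratI {X : Type*} (A : Set (ℕ → X)) (σ : List X → X) : Prop :=
  ∀ x : ℕ → X, (∀ n, x (2 * n) = σ (resSeq x (2 * n))) → x ∈ A

/-- `τ` is a winning strategy for Player II in the length-ω game on `X` with payoff `A`. -/
def WinStratII {X : Type*} (A : Set (ℕ → X)) (τ : List X → X) : Prop :=
  ∀ x : ℕ → X, (∀ n, x (2 * n + 1) = τ (resSeq x (2 * n + 1))) → x ∉ A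

/-- The length-ω game on `X` with payoff `A` is determined. -/
def DeterminedOmega {X : Type*} (A : Set (ℕ → X)) : Prop :=
  (∃ σ, WinStratI A σ) ∨ (∃ τ, WinStratII A τ)

/-- Lexicographic order on ℕ × ℕ. -/
def lex2 (p q : ℕ × ℕ) : Prop := p.1 < q.1 ∨ (p.1 = q.1 ∧ p.2 < q.2)

/-- A strategy in a game of length ω²: it assigns a move to each position, as a
function of the partial play on the lexicographic initial segment below the position. -/
abbrev Strat2 (X : Type*) := ∀ p : ℕ × ℕ, ({q : ℕ × ℕ // lex2 q p} → X) → X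

/-- `σ` is winning for Player I (who moves at `(m,n)` for `n` even) in the game of
length ω² on `X` with payoff `A`. -/
def WinStrat2I {X : Type*} (A : Set ((ℕ × ℕ) → X)) (σ : Strat2 X) : Prop :=
  ∀ x : (ℕ × ℕ) → X, (∀ p : ℕ × ℕ, Even p.2 → x p = σ p fun q => x q.1) → x ∈ A

/-- `τ` is winning for Player II (who moves at `(m,n)` for `n` odd) in the game of
length ω² on `X` with payoff `A`. -/
def WinStrat2II {X : Type*} (A : Set ((ℕ × ℕ) → X)) (τ : Strat2 X) : Prop :=
  ∀ x : (ℕ × ℕ) → X, (∀ p : ℕ × ℕ, Odd p.2 → x p = τ p fun q => x q.1) → x ∉ A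

/-- The game of length ω² on `X` with payoff `A` is determined. -/
def Determined2 {X : Type*} (A : Set ((ℕ × ℕ) → X)) : Prop :=
  (∃ σ, WinStrat2I A σ) ∨ (∃ τ, WinStrat2II A τ)

/-- Lexicographic order on ℕ × ℕ × ℕ. -/
def lex3 (p q : ℕ × ℕ × ℕ) : Prop := p.1 < q.1 ∨ (p.1 = q.1 ∧ lex2 p.2 q.2)

/-- A strategy in a game of length ω³. -/
abbrev Strat3 (X : Type*) := ∀ p : ℕ × ℕ × ℕ, ({q : ℕ × ℕ × ℕ // lex3 q p} → X) → X

/-- `σ` is winning for Player I (who moves at `(k,m,n)` for `n` even) in the game of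
length ω³ on `X` with payoff `A`. -/
def WinStrat3I {X : Type*} (A : Set ((ℕ × ℕ × ℕ) → X)) (σ : Strat3 X) : Prop :=
  ∀ x : (ℕ × ℕ × ℕ) → X, (∀ p : ℕ × ℕ × ℕ, Even p.2.2 → x p = σ p fun q => x q.1) → x ∈ A

/-- `τ` is winning for Player II in the game of length ω³ on `X` with payoff `A`. -/
def WinStrat3II {X : Type*} (A : Set ((ℕ × ℕ × ℕ) → X)) (τ : Strat3 X) : Prop :=
  ∀ x : (ℕ × ℕ × ℕ) → X, (∀ p : ℕ × ℕ × ℕ, Odd p.2.2 → x p = τ p fun q => x q.1) → x ∉ A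

/-- The game of length ω³ on `X` with payoff `A` is determined. -/
def Determined3 {X : Type*} (A : Set ((ℕ × ℕ × ℕ) → X)) : Prop :=
  (∃ σ, WinStrat3I A σ) ∨ (∃ τ, WinStrat3II A τ)

/-- `A ∈ ⅁ℝ_{ω²}`: Player I has a winning strategy in the game of length ω² on ℝ
(the Baire space) with payoff `A`. -/
def GameR2I (A : Set ((ℕ × ℕ) → Baire)) : Prop := ∃ σ : Strat2 Baire, WinStrat2I A σ

/-- `C ∈ ⅁ℝ_{ω²}Σ⁰₁` as a subset of the topological space `Z`. -/
def InGameR2Sigma01 {Z : Type*} [TopologicalSpace Z] (C : Set Z) : Prop :=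
  ∃ B : Set (Z × ((ℕ × ℕ) → Baire)), IsOpen B ∧ C = {z | GameR2I {y | (z, y) ∈ B}}


/-!
Let `C = {z | B_z ∈ ⅁ℝ_{ω²}}` with `B` open. A game of length ω³ simulates both games at once:
its first block of length ω² is the game on ℕ producing `z`, and the remaining blocks play the
game on ℝ producing `y`, the real `y (m, n)` being played digit by digit in the row
`(m + 1, n, ·)`. Decoding a run into `(z, y)` is continuous, so the payoff "`(z, y) ∈ B`" of
the simulating game is open, and the game is determined. A winning strategy in it, restricted
to the first block, wins the game with payoff `C`. If it is Player I's, then for each `z` she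
reaches, running it against the opponent that copies `z` and the reals played gives her a
winning strategy in the game on ℝ, so `z ∈ C`. If it is Player II's and `z ∈ C` via some `σ`,
Player I playing `z` and then `σ` in the simulating game produces a run both in and out of the
payoff.
-/

theorem wellFounded_lex2 : WellFounded lex2 :=
  (wellFounded_lt.prod_lex wellFounded_lt).mono fun _ _ => Prod.lex_def.mpr

theorem wellFounded_lex3 : WellFounded lex3 :=
  (wellFounded_lt.prod_lex wellFounded_lex2).mono fun _ _ => Prod.lex_def.mpr

theorem lex3_trans {p q r : ℕ × ℕ × ℕ} (hpq : lex3 p q) (hqr : lex3 q r) : lex3 p r := by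
  unfold lex3 lex2 at *
  omega

section Run

variable {X : Type*}

def run3 (s : Strat3 X) : (ℕ × ℕ × ℕ) → X :=
  wellFounded_lex3.fix fun p ih => s p fun q => ih q.1 q.2

theorem run3_eq (s : Strat3 X) (p : ℕ × ℕ × ℕ) :
    run3 s p = s p fun q => run3 s q.1 :=
  wellFounded_lex3.fix_eq _ p

theorem run3_congr {s s' : Strat3 X} (q : ℕ × ℕ × ℕ)
    (hs : ∀ p, lex3 p q ∨ p = q → s p = s' p) : run3 s q = run3 s' q := by
  induction q using wellFounded_lex3.induction with
  | _ q ih =>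
    rw [run3_eq, run3_eq, hs q (Or.inr rfl)]
    congr 1
    funext p
    refine ih p.1 p.2 fun r hr => hs r (Or.inl ?_)
    rcases hr with hr | rfl
    exacts [lex3_trans hr p.2, p.2]

def combine3 (σ τ : Strat3 X) : Strat3 X := fun p => if Even p.2.2 then σ p else τ p

theorem run3_combine3_of_even (σ τ : Strat3 X) {p : ℕ × ℕ × ℕ} (hp : Even p.2.2) :
    run3 (combine3 σ τ) p = σ p fun q => run3 (combine3 σ τ) q.1 := by
  rw [run3_eq, combine3, if_pos hp]

theorem run3_combine3_of_odd (σ τ : Strat3 X) {p : ℕ × ℕ × ℕ} (hp : Odd p.2.2) :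
    run3 (combine3 σ τ) p = τ p fun q => run3 (combine3 σ τ) q.1 := by
  rw [run3_eq, combine3, if_neg (Nat.not_even_iff_odd.mpr hp)]

def firstBlock (x : (ℕ × ℕ × ℕ) → X) : (ℕ × ℕ) → X := fun p => x (0, p.1, p.2)

theorem firstBlock_run3 {s : Strat3 X} {z : (ℕ × ℕ) → X}
    (hs : ∀ (p : ℕ × ℕ) h, (∀ q, h q = z q.1.2) → s (0, p.1, p.2) h = z p) :
    firstBlock (run3 s) = z := by
  funext p
  induction p using wellFounded_lex2.induction with
  | _ p ih =>
    rw [firstBlock, run3_eq]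
    refine hs p _ fun ⟨(k, q), hkq⟩ => ?_
    obtain ⟨rfl, hq⟩ : k = 0 ∧ lex2 q p := hkq.resolve_left (Nat.not_lt_zero k)
    exact ih q hq

def firstBlockStrat (s : Strat3 X) : Strat2 X := fun p h =>
  s (0, p.1, p.2) fun q => h ⟨q.1.2, (q.2.resolve_left (Nat.not_lt_zero _)).2⟩

theorem firstBlockStrat_apply {s : Strat3 X} {z : (ℕ × ℕ) → X} {p : ℕ × ℕ}
    {h : {q // lex3 q (0, p.1, p.2)} → X} (hh : ∀ q, h q = z q.1.2) :
    firstBlockStrat s p (fun q => z q.1) = s (0, p.1, p.2) h :=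
  congrArg _ (funext fun q => (hh q).symm)

end Run

/-- The real `y (m, n)` of the game on ℝ is played in the row `(m + 1, n, ·)`, at the positions
with the parity of `n`: these belong to the player who owns `(m, n)`. -/
def realMoves (x : (ℕ × ℕ × ℕ) → ℕ) : (ℕ × ℕ) → Baire :=
  fun p j => x (p.1 + 1, p.2, 2 * j + p.2 % 2)

def decode (x : (ℕ × ℕ × ℕ) → ℕ) : ((ℕ × ℕ) → ℕ) × ((ℕ × ℕ) → Baire) :=
  (firstBlock x, realMoves x)

theorem continuous_decode : Continuous decode := by
  unfold decode firstBlock realMoves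
  fun_prop

section PlayerI

/-- In the rows of Player I's reals the moves are dummies, so that the run up to such a row does
not depend on the real played there. -/
def replayII (z : (ℕ × ℕ) → ℕ) (y : (ℕ × ℕ) → Baire) : Strat3 ℕ
  | (0, p), _ => z p
  | (m + 1, n, i), _ => if Even n then 0 else y (m, n) (i / 2)

theorem replayII_congr (z : (ℕ × ℕ) → ℕ) {y y' : (ℕ × ℕ) → Baire} {P : ℕ × ℕ} (hP : Even P.2)
    (hy : ∀ q, lex2 q P → y q = y' q) {i : ℕ} {p : ℕ × ℕ × ℕ}
    (hp : lex3 p (P.1 + 1, P.2, i) ∨ p = (P.1 + 1, P.2, i)) :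
    replayII z y p = replayII z y' p := by
  funext h
  obtain ⟨_ | m, n, i'⟩ := p
  · rfl
  by_cases hn : Even n
  · simp only [replayII, if_pos hn]
  · have hlt : lex2 (m, n) P := by
      rw [Nat.even_iff] at hP hn
      simp only [lex3, lex2, Prod.mk.injEq] at hp ⊢
      omega
    simp only [replayII, if_neg hn, hy _ hlt]

open Classical in
def extendByZero (P : ℕ × ℕ) (h : {q // lex2 q P} → Baire) : (ℕ × ℕ) → Baire :=
  fun q => if hq : lex2 q P then h ⟨q, hq⟩ else 0

def realStratOf (σ : Strat3 ℕ) (z : (ℕ × ℕ) → ℕ) : Strat2 Baire := fun P h =>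
  realMoves (run3 (combine3 σ (replayII z (extendByZero P h)))) P

variable {σ : Strat3 ℕ} {z : (ℕ × ℕ) → ℕ} {y : (ℕ × ℕ) → Baire}

theorem firstBlock_run3_replayII
    (hz : ∀ p : ℕ × ℕ, Even p.2 → z p = firstBlockStrat σ p fun q => z q.1) :
    firstBlock (run3 (combine3 σ (replayII z y))) = z := by
  refine firstBlock_run3 fun p h hh => ?_
  by_cases hp : Even p.2
  · rw [combine3, if_pos hp, hz p hp, firstBlockStrat_apply hh]
  · rw [combine3, if_neg hp]
    rfl

theorem realMoves_run3_replayII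
    (hy : ∀ p : ℕ × ℕ, Even p.2 → y p = realStratOf σ z p fun q => y q.1) :
    realMoves (run3 (combine3 σ (replayII z y))) = y := by
  funext p j
  rcases Nat.even_or_odd p.2 with hp | hp
  · have hext : ∀ q, lex2 q p → y q = extendByZero p (fun q => y q.1) q := fun q hq => by
      rw [extendByZero, dif_pos hq]
    rw [hy p hp, realStratOf, realMoves, realMoves]
    exact run3_congr _ fun r hr => by
      simp only [combine3, replayII_congr z hp hext hr]
  · have hj : 2 * j + p.2 % 2 = 2 * j + 1 := by rw [Nat.odd_iff.mp hp]
    rw [realMoves, hj, run3_combine3_of_odd _ _ ⟨j, rfl⟩]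
    simp only [replayII, if_neg (Nat.not_even_iff_odd.mpr hp)]
    congr
    omega

theorem winStrat2I_firstBlockStrat {B : Set (((ℕ × ℕ) → ℕ) × ((ℕ × ℕ) → Baire))}
    (hσ : WinStrat3I (decode ⁻¹' B) σ) :
    WinStrat2I {z | GameR2I {y | (z, y) ∈ B}} (firstBlockStrat σ) := fun z hz =>
  ⟨realStratOf σ z, fun y hy => by
    have hrun := hσ _ fun p hp => run3_combine3_of_even σ (replayII z y) hp
    rwa [Set.mem_preimage, decode, firstBlock_run3_replayII hz, realMoves_run3_replayII hy]
      at hrun⟩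

end PlayerI

section PlayerII

def realHistory {m n i : ℕ} (h : {q // lex3 q (m + 1, n, i)} → ℕ) :
    {q // lex2 q (m, n)} → Baire := fun q j =>
  h ⟨(q.1.1 + 1, q.1.2, 2 * j + q.1.2 % 2), by
    have hq := q.2
    simp only [lex3, lex2] at hq ⊢
    omega⟩

def replayI (z : (ℕ × ℕ) → ℕ) (σ : Strat2 Baire) : Strat3 ℕ
  | (0, p), _ => z p
  | (m + 1, n, i), h => if Even n then σ (m, n) (realHistory h) (i / 2) else 0

variable {σ : Strat2 Baire} {τ : Strat3 ℕ} {z : (ℕ × ℕ) → ℕ}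

theorem firstBlock_run3_replayI
    (hz : ∀ p : ℕ × ℕ, Odd p.2 → z p = firstBlockStrat τ p fun q => z q.1) :
    firstBlock (run3 (combine3 (replayI z σ) τ)) = z := by
  refine firstBlock_run3 fun p h hh => ?_
  by_cases hp : Even p.2
  · rw [combine3, if_pos hp]
    rfl
  · rw [combine3, if_neg hp, hz p (Nat.not_even_iff_odd.mp hp), firstBlockStrat_apply hh]

theorem realMoves_run3_replayI (p : ℕ × ℕ) (hp : Even p.2) :
    realMoves (run3 (combine3 (replayI z σ) τ)) p =
      σ p fun q => realMoves (run3 (combine3 (replayI z σ) τ)) q.1 := by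
  obtain ⟨m, n⟩ := p
  funext j
  have hj : 2 * j + n % 2 = 2 * j := by rw [Nat.even_iff.mp hp, add_zero]
  rw [realMoves, hj, run3_combine3_of_even _ _ (even_two_mul j)]
  simp only [replayI, if_pos hp]
  congr
  omega

theorem winStrat2II_firstBlockStrat {B : Set (((ℕ × ℕ) → ℕ) × ((ℕ × ℕ) → Baire))}
    (hτ : WinStrat3II (decode ⁻¹' B) τ) :
    WinStrat2II {z | GameR2I {y | (z, y) ∈ B}} (firstBlockStrat τ) := by
  rintro z hz ⟨σ, hσ⟩
  apply hτ _ fun p hp => run3_combine3_of_odd (replayI z σ) τ hp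
  rw [Set.mem_preimage, decode, firstBlock_run3_replayI hz]
  exact hσ _ realMoves_run3_replayI

end PlayerII

/-- If all open games of length ω³ on ℕ are determined, then all games of length ω²
on ℕ with payoff in ⅁ℝ_{ω²}Σ⁰₁ are determined. -/
theorem openOmegaCubedDet_imp_gameClassOmegaSqDet
    (h : ∀ A : Set ((ℕ × ℕ × ℕ) → ℕ), IsOpen A → Determined3 A) :
    ∀ C : Set ((ℕ × ℕ) → ℕ), InGameR2Sigma01 C → Determined2 C := by
  rintro C ⟨B, hB, rfl⟩
  rcases h _ (hB.preimage continuous_decode) with ⟨σ, hσ⟩ | ⟨τ, hτ⟩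
  · exact Or.inl ⟨_, winStrat2I_firstBlockStrat hσ⟩
  · exact Or.inr ⟨_, winStrat2II_firstBlockStrat hτ⟩

end
end

section
/- For every A ⊆ (ℕ → ℝ), Player I has a winning strategy in the game 𝒢_A if and only if Player I has a winning strategy in the game G_A. -/
noncomputable section

/-- The homeomorphism `e : (ℕ → ℝ) ≃ ℝ` induced by the pairing bijection `ℕ × ℕ ≃ ℕ`. -/
def e : (ℕ → Baire) ≃ Baire :=
  (Equiv.curry ℕ ℕ ℕ).symm.trans (Equiv.arrowCongr Nat.pairEquiv (Equiv.refl ℕ))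

/-- The history of the first `n` moves when the strategy `σ` for Player I is faced off
against the strategy `τ` for Player II in a length-ω game on ℝ. -/
def histPlay (σ τ : List Baire → Baire) : ℕ → List Baire
  | 0 => []
  | n + 1 =>
    let l := histPlay σ τ n
    l ++ [if Even n then σ l else τ l]

/-- The run obtained by facing off `σ` (as Player I) against `τ` (as Player II). -/
def playRun (σ τ : List Baire → Baire) (n : ℕ) : Baire :=
  if Even n then σ (histPlay σ τ n) else τ (histPlay σ τ n)

/-- `σ*τ`: the real coding the run obtained by facing off `σ` against `τ`. -/
def faceOff (σ τ : List Baire → Baire) : Baire := e (playRun σ τ)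


/-- Legality of Player I's move `X` at turn `k` of the game `𝒢_A`: if `k` is even,
Player I must have a winning strategy in the game on ℝ with payoff `X`; if `k` is odd,
Player II must have no winning strategy in the game on ℝ with payoff `X`. -/
def LegalMove (k : ℕ) (X : Set Baire) : Prop :=
  if Even k then ∃ σ, WinStratI {q : ℕ → Baire | e q ∈ X} σ
  else ¬ ∃ τ, WinStratII {q : ℕ → Baire | e q ∈ X} τ

/-- `σ` is a winning strategy for Player I in the game `𝒢_A`: at turn `k` Player I plays
the set `X_k = σ (x₀,…,x_{k-1})` and Player II responds with a real `x_k ∈ X_k`.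
Player I wins a run iff either Player II is the first to break a rule (she plays some
`x_k ∉ X_k` while all of Player I's moves so far were legal), or all moves were legal
throughout and `(x₀,x₁,…) ∈ A`. -/
def GcalWinsI (A : Set (ℕ → Baire)) (σ : List Baire → Set Baire) : Prop :=
  ∀ x : ℕ → Baire,
    (∃ k, (∀ j ≤ k, LegalMove j (σ (resSeq x j))) ∧ (∀ j < k, x j ∈ σ (resSeq x j)) ∧
      x k ∉ σ (resSeq x k)) ∨
    ((∀ k, LegalMove k (σ (resSeq x k))) ∧ (∀ k, x k ∈ σ (resSeq x k)) ∧ x ∈ A)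

/-- The sequence of reals `x₀, x₁, …` determined by a run `s` of the game `G_A`:
`x_{2k} = s(4k) * s(4k+1)` and `x_{2k+1} = s(4k+3) * s(4k+2)`. -/
def GxSeq (s : ℕ → (List Baire → Baire)) (m : ℕ) : Baire :=
  if Even m then faceOff (s (2 * m)) (s (2 * m + 1)) else faceOff (s (2 * m + 1)) (s (2 * m))

/-- `S` is a winning strategy for Player I in the game `G_A`: Player I plays the moves
at turns of the form `4n` and `4n+3` (strategies for Player I in length-ω games on ℝ),
Player II plays at turns `4n+1` and `4n+2` (strategies for Player II); Player I wins a
run `s` iff the induced sequence of reals lies in `A`. -/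
def GWinsI (A : Set (ℕ → Baire)) (S : List (List Baire → Baire) → (List Baire → Baire)) :
    Prop :=
  ∀ s : ℕ → (List Baire → Baire),
    (∀ k, k % 4 = 0 ∨ k % 4 = 3 → s k = S (resSeq s k)) → (fun m => GxSeq s m) ∈ A


/-!
Given a winning strategy `S` for Player I in `G_A`, Player I plays in `𝒢_A` the set of reals that
`S` can still force at the corresponding position of `G_A`: the plays of her current strategy
against every strategy of Player II (even turns), resp. the plays of her answer to `τ` against `τ`,
for every strategy `τ` of Player II (odd turns). `S` itself witnesses that these moves are legal,
and every real chosen by Player II is realised by moves of Player II in `G_A`, so the run of `𝒢_A`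
is the sequence of reals of a run of `G_A` according to `S`.

Conversely, given a winning strategy in `𝒢_A`, Player I plays at turn `4j` of `G_A` a winning
strategy for her legal set `X_{2j}`; at turn `4j + 3`, since Player II's strategy `τ` of turn
`4j + 2` does not win the game with payoff `X_{2j+1}`, she replays some run according to `τ` whose
real lies in `X_{2j+1}`. By induction each real lies in the set Player I played, so every set was
legal and the sequence of reals lies in `A`.
-/

section Runs

variable {α : Type*}

theorem resSeq_length (x : ℕ → α) (n : ℕ) : (resSeq x n).length = n := by
  simp [resSeq]

theorem resSeq_succ (x : ℕ → α) (n : ℕ) : resSeq x (n + 1) = resSeq x n ++ [x n] := by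
  rw [resSeq, List.ofFn_succ']
  simp [resSeq]

theorem resSeq_getD (x : ℕ → α) {n i : ℕ} (h : i < n) (d : α) : (resSeq x n).getD i d = x i := by
  simp [resSeq, h]

theorem resSeq_congr {x y : ℕ → α} {n : ℕ} (h : ∀ i < n, x i = y i) :
    resSeq x n = resSeq y n := by
  simp only [resSeq, List.ofFn_inj]
  exact funext fun i => h i i.isLt

def ConsistentI (σ : List α → α) (p : ℕ → α) : Prop :=
  ∀ n, p (2 * n) = σ (resSeq p (2 * n))

def ConsistentII (τ : List α → α) (p : ℕ → α) : Prop :=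
  ∀ n, p (2 * n + 1) = τ (resSeq p (2 * n + 1))

theorem exists_consistentII_mem_of_not_winStratII {A : Set (ℕ → α)} {τ : List α → α}
    (h : ¬ WinStratII A τ) : ∃ p, ConsistentII τ p ∧ p ∈ A := by
  simpa [WinStratII, ConsistentII] using h

end Runs

section FaceOff

variable {σ τ : List Baire → Baire}

theorem histPlay_eq_resSeq (n : ℕ) : histPlay σ τ n = resSeq (playRun σ τ) n := by
  induction n with
  | zero => rfl
  | succ n ih => rw [resSeq_succ, ← ih]; rfl

theorem playRun_apply (n : ℕ) :
    playRun σ τ n = if Even n then σ (resSeq (playRun σ τ) n) else τ (resSeq (playRun σ τ) n) := by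
  rw [playRun, histPlay_eq_resSeq]

theorem playRun_unique {p : ℕ → Baire}
    (h : ∀ n, p n = if Even n then σ (resSeq p n) else τ (resSeq p n)) : playRun σ τ = p := by
  funext n
  induction n using Nat.strong_induction_on with
  | _ n ih => rw [playRun_apply, h n, resSeq_congr ih]

theorem consistentI_playRun : ConsistentI σ (playRun σ τ) := fun n => by
  rw [playRun_apply, if_pos (even_two_mul n)]

theorem consistentII_playRun : ConsistentII τ (playRun σ τ) := fun n => by
  rw [playRun_apply, if_neg (Nat.not_even_two_mul_add_one n)]

def followRun (p : ℕ → Baire) : List Baire → Baire := fun l => p l.length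

theorem faceOff_followRun_right {p : ℕ → Baire} (hp : ConsistentI σ p) :
    faceOff σ (followRun p) = e p := by
  refine congrArg e (playRun_unique fun n => ?_)
  split_ifs with hn
  · obtain ⟨i, rfl⟩ := hn
    rw [← two_mul, hp i]
  · rw [followRun, resSeq_length]

theorem faceOff_followRun_left {p : ℕ → Baire} (hp : ConsistentII τ p) :
    faceOff (followRun p) τ = e p := by
  refine congrArg e (playRun_unique fun n => ?_)
  split_ifs with hn
  · rw [followRun, resSeq_length]
  · obtain ⟨i, rfl⟩ := Nat.not_even_iff_odd.mp hn
    rw [hp i]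

end FaceOff

section GcalWins

variable {A : Set (ℕ → Baire)} {σ : List Baire → Set Baire}

theorem gcalWinsI_of_legalMove (hlegal : ∀ l, LegalMove l.length (σ l))
    (hwin : ∀ x : ℕ → Baire, (∀ k, x k ∈ σ (resSeq x k)) → x ∈ A) : GcalWinsI A σ := by
  classical
  intro x
  have hlegal_x : ∀ k, LegalMove k (σ (resSeq x k)) := fun k => by
    simpa only [resSeq_length] using hlegal (resSeq x k)
  by_cases hmem : ∀ k, x k ∈ σ (resSeq x k)
  · exact Or.inr ⟨hlegal_x, hmem, hwin x hmem⟩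
  · push Not at hmem
    exact Or.inl ⟨Nat.find hmem, fun j _ => hlegal_x j,
      fun j hj => not_not.mp (Nat.find_min hmem hj), Nat.find_spec hmem⟩

theorem GcalWinsI.legalMove (hσ : GcalWinsI A σ) {x : ℕ → Baire} {m : ℕ}
    (hmem : ∀ j < m, x j ∈ σ (resSeq x j)) : LegalMove m (σ (resSeq x m)) := by
  rcases hσ x with ⟨k, hlegal, -, hk⟩ | ⟨hlegal, -, -⟩
  · exact hlegal m (not_lt.mp fun hkm => hk (hmem k hkm))
  · exact hlegal m

theorem GcalWinsI.mem {x : ℕ → Baire} (hσ : GcalWinsI A σ)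
    (hmem : ∀ k, x k ∈ σ (resSeq x k)) : x ∈ A := by
  rcases hσ x with ⟨k, -, -, hk⟩ | ⟨-, -, hA⟩
  · exact absurd (hmem k) hk
  · exact hA

theorem GcalWinsI.mem_of_legalMove_imp_mem (hσ : GcalWinsI A σ) {x : ℕ → Baire}
    (h : ∀ m, LegalMove m (σ (resSeq x m)) → x m ∈ σ (resSeq x m)) : x ∈ A :=
  hσ.mem fun m => by
    induction m using Nat.strong_induction_on with
    | _ m ih => exact h m (hσ.legalMove ih)

end GcalWins

abbrev Strat : Type := List Baire → Baire

section GToGcal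

variable (S : List Strat → Strat)

/-- Player I's set at turn `k` of `𝒢_A`, when `h` (of length `2k`) is the simulated run of `G_A`. -/
def gcalMove (h : List Strat) : Set Baire :=
  if h.length % 4 = 0 then Set.range (faceOff (S h)) else Set.range fun τ => faceOff (S (h ++ [τ])) τ

theorem legalMove_gcalMove {h : List Strat} {k : ℕ} (hk : h.length = 2 * k) :
    LegalMove k (gcalMove S h) := by
  have hparity : h.length % 4 = 0 ↔ Even k := by rw [Nat.even_iff]; omega
  simp only [LegalMove, gcalMove, hparity]
  split_ifs
  · exact ⟨S h, fun p hp => ⟨followRun p, faceOff_followRun_right hp⟩⟩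
  · rintro ⟨τ, hτ⟩
    exact hτ _ consistentII_playRun ⟨τ, rfl⟩

/-- The two moves of `G_A` by which the position `h` answers Player II's real `r` in `𝒢_A`. -/
def gStep (h : List Strat) (r : Baire) : Strat × Strat :=
  if h.length % 4 = 0 then (S h, Classical.epsilon fun τ => faceOff (S h) τ = r)
  else
    let τ := Classical.epsilon fun τ => faceOff (S (h ++ [τ])) τ = r
    (τ, S (h ++ [τ]))

theorem gStep_fst_of_mod_four_eq_zero {h : List Strat} (hh : h.length % 4 = 0) (r : Baire) :
    (gStep S h r).1 = S h := by
  simp only [gStep, if_pos hh]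

theorem gStep_snd_of_mod_four_ne_zero {h : List Strat} (hh : h.length % 4 ≠ 0) (r : Baire) :
    (gStep S h r).2 = S (h ++ [(gStep S h r).1]) := by
  simp only [gStep, if_neg hh]

theorem faceOff_gStep_of_mod_four_eq_zero {h : List Strat} {r : Baire}
    (hh : h.length % 4 = 0) (hr : r ∈ gcalMove S h) :
    faceOff (gStep S h r).1 (gStep S h r).2 = r := by
  rw [gcalMove, if_pos hh] at hr
  simp only [gStep, if_pos hh]
  exact Classical.epsilon_spec hr

theorem faceOff_gStep_of_mod_four_ne_zero {h : List Strat} {r : Baire}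
    (hh : h.length % 4 ≠ 0) (hr : r ∈ gcalMove S h) :
    faceOff (gStep S h r).2 (gStep S h r).1 = r := by
  rw [gcalMove, if_neg hh] at hr
  simp only [gStep, if_neg hh]
  exact Classical.epsilon_spec hr

def gHist (l : List Baire) : List Strat :=
  l.foldl (fun h r => h ++ [(gStep S h r).1, (gStep S h r).2]) []

theorem gHist_concat (l : List Baire) (r : Baire) :
    gHist S (l ++ [r]) = gHist S l ++ [(gStep S (gHist S l) r).1, (gStep S (gHist S l) r).2] := by
  simp [gHist]

theorem length_gHist (l : List Baire) : (gHist S l).length = 2 * l.length := by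
  induction l using List.reverseRecOn with
  | nil => rfl
  | append_singleton l r ih => simp [gHist_concat, ih]; ring

/-- The run of `G_A` in which `S` meets the moves of Player II that realise the reals `x`. -/
def gRun (x : ℕ → Baire) (n : ℕ) : Strat :=
  let p := gStep S (gHist S (resSeq x (n / 2))) (x (n / 2))
  if Even n then p.1 else p.2

variable {S}

theorem resSeq_gRun (x : ℕ → Baire) (k : ℕ) :
    resSeq (gRun S x) (2 * k) = gHist S (resSeq x k) := by
  induction k with
  | zero => rfl
  | succ k ih =>
    rw [show 2 * (k + 1) = 2 * k + 1 + 1 by ring, resSeq_succ, resSeq_succ, ih, resSeq_succ,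
      gHist_concat]
    simp [gRun, Nat.mul_add_div]

theorem gRun_two_mul (x : ℕ → Baire) (k : ℕ) :
    gRun S x (2 * k) = (gStep S (gHist S (resSeq x k)) (x k)).1 := by
  simp [gRun]

theorem gRun_two_mul_add_one (x : ℕ → Baire) (k : ℕ) :
    gRun S x (2 * k + 1) = (gStep S (gHist S (resSeq x k)) (x k)).2 := by
  simp [gRun, Nat.mul_add_div]

theorem gRun_follows (x : ℕ → Baire) (k : ℕ) (hk : k % 4 = 0 ∨ k % 4 = 3) :
    gRun S x k = S (resSeq (gRun S x) k) := by
  obtain ⟨j, rfl | rfl⟩ : ∃ j, k = 2 * (2 * j) ∨ k = 2 * (2 * j + 1) + 1 := ⟨k / 4, by omega⟩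
  · rw [gRun_two_mul, resSeq_gRun,
      gStep_fst_of_mod_four_eq_zero S (by rw [length_gHist, resSeq_length]; omega)]
  · rw [gRun_two_mul_add_one, resSeq_succ (gRun S x), resSeq_gRun, gRun_two_mul,
      gStep_snd_of_mod_four_ne_zero S (by rw [length_gHist, resSeq_length]; omega)]

theorem gxSeq_gRun {x : ℕ → Baire} (hx : ∀ k, x k ∈ gcalMove S (gHist S (resSeq x k))) :
    GxSeq (gRun S x) = x := by
  funext m
  have hparity : (gHist S (resSeq x m)).length % 4 = 0 ↔ Even m := by
    rw [length_gHist, resSeq_length, Nat.even_iff]; omega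
  rw [GxSeq, gRun_two_mul, gRun_two_mul_add_one]
  split_ifs with hm
  · exact faceOff_gStep_of_mod_four_eq_zero S (hparity.mpr hm) (hx m)
  · exact faceOff_gStep_of_mod_four_ne_zero S (mt hparity.mp hm) (hx m)

theorem gcalWinsI_of_gWinsI {A : Set (ℕ → Baire)} (hS : GWinsI A S) :
    GcalWinsI A fun l => gcalMove S (gHist S l) :=
  gcalWinsI_of_legalMove (fun l => legalMove_gcalMove S (length_gHist S l))
    fun x hx => gxSeq_gRun hx ▸ hS (gRun S x) (gRun_follows x)

end GToGcal

section GcalToG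

variable {σ : List Baire → Set Baire}

def realsOf (l : List Strat) : List Baire :=
  resSeq (GxSeq fun n => l.getD n default) (l.length / 2)

theorem realsOf_resSeq (s : ℕ → Strat) (k : ℕ) :
    realsOf (resSeq s k) = resSeq (GxSeq s) (k / 2) := by
  rw [realsOf, resSeq_length]
  refine resSeq_congr fun m hm => ?_
  simp only [GxSeq, resSeq_getD s (show 2 * m < k by omega),
    resSeq_getD s (show 2 * m + 1 < k by omega)]

variable (σ) in
def gStrat (l : List Strat) : Strat :=
  if l.length % 4 = 0 then Classical.epsilon (WinStratI {q | e q ∈ σ (realsOf l)})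
  else followRun <| Classical.epsilon fun p =>
    ConsistentII (l.getLastD default) p ∧ e p ∈ σ (realsOf l)

theorem gxSeq_two_mul_mem {s : ℕ → Strat} {j : ℕ}
    (hs : s (4 * j) = gStrat σ (resSeq s (4 * j)))
    (hlegal : LegalMove (2 * j) (σ (resSeq (GxSeq s) (2 * j)))) :
    GxSeq s (2 * j) ∈ σ (resSeq (GxSeq s) (2 * j)) := by
  rw [LegalMove, if_pos (even_two_mul j)] at hlegal
  have hwin := Classical.epsilon_spec hlegal
  rw [gStrat, if_pos (by rw [resSeq_length]; omega), realsOf_resSeq,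
    show 4 * j / 2 = 2 * j by omega] at hs
  rw [← hs] at hwin
  rw [GxSeq, if_pos (even_two_mul j), show 2 * (2 * j) = 4 * j by ring]
  exact hwin _ consistentI_playRun

theorem gxSeq_two_mul_add_one_mem {s : ℕ → Strat} {j : ℕ}
    (hs : s (4 * j + 3) = gStrat σ (resSeq s (4 * j + 3)))
    (hlegal : LegalMove (2 * j + 1) (σ (resSeq (GxSeq s) (2 * j + 1)))) :
    GxSeq s (2 * j + 1) ∈ σ (resSeq (GxSeq s) (2 * j + 1)) := by
  rw [LegalMove, if_neg (Nat.not_even_two_mul_add_one j)] at hlegal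
  have hbeaten : ∃ p, ConsistentII (s (4 * j + 2)) p ∧ e p ∈ σ (resSeq (GxSeq s) (2 * j + 1)) :=
    exists_consistentII_mem_of_not_winStratII fun h => hlegal ⟨s (4 * j + 2), h⟩
  have hrun := Classical.epsilon_spec hbeaten
  rw [gStrat, if_neg (by rw [resSeq_length]; omega), realsOf_resSeq,
    show (4 * j + 3) / 2 = 2 * j + 1 by omega, resSeq_succ, List.getLastD_concat] at hs
  rw [GxSeq, if_neg (Nat.not_even_two_mul_add_one j),
    show 2 * (2 * j + 1) + 1 = 4 * j + 3 by ring, show 2 * (2 * j + 1) = 4 * j + 2 by ring, hs,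
    faceOff_followRun_left hrun.1]
  exact hrun.2

theorem gWinsI_of_gcalWinsI {A : Set (ℕ → Baire)} (hσ : GcalWinsI A σ) :
    GWinsI A (gStrat σ) := fun s hs =>
  hσ.mem_of_legalMove_imp_mem fun m hlegal => by
    obtain ⟨j, rfl | rfl⟩ : ∃ j, m = 2 * j ∨ m = 2 * j + 1 := ⟨m / 2, by omega⟩
    · exact gxSeq_two_mul_mem (hs _ (by omega)) hlegal
    · exact gxSeq_two_mul_add_one_mem (hs _ (by omega)) hlegal

end GcalToG

/-- Player I has a winning strategy in `𝒢_A` iff she has one in `G_A`. -/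
theorem Gcal_iff_G (A : Set (ℕ → Baire)) :
    (∃ σ, GcalWinsI A σ) ↔ (∃ S, GWinsI A S) :=
  ⟨fun ⟨σ, hσ⟩ => ⟨gStrat σ, gWinsI_of_gcalWinsI hσ⟩,
    fun ⟨_, hS⟩ => ⟨_, gcalWinsI_of_gWinsI hS⟩⟩

end
end

section
/- Suppose that every game of length ω² on ℕ whose payoff belongs to ⅁ℝ_{ω²}Σ⁰₁ (as a subset of the space (ℕ×ℕ) → ℕ with the product topology) is determined. Then every game of length ω³ on ℕ with open payoff (i.e., payoff A ⊆ ((ℕ×ℕ×ℕ) → ℕ) open in the product topology) is determined. -/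
noncomputable section

/-!
Cut the game of length ω³ into superblocks of length ω². What remains of it after superblock `k`
is simulated by a game of length ω² on reals: at `(j, 2m)` I plays a real coding his strategy for
block `m` of superblock `k + 1 + j`, II answers with that whole block, and II loses outright if the
block does not follow the strategy. For an open payoff `A`, the superblocks `z` after which I wins
this real game form a set in ⅁ℝ_{ω²}Σ⁰₁, so the game of length ω² on ℕ with that payoff is
determined.

If I wins it for superblock `0`, he wins the ω³-game: he plays that strategy in superblock `0`,
then reads his moves off the strategy reals of a winning strategy in the real game. Otherwise II
wins it, and keeps winning it at every superblock: a winning strategy for I at superblock `k + 1`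
would let I win the real game after superblock `k`, by playing codes of its blocks in the first
ω-block of the real game and then a winning strategy in the next real game. A run in the open set
`A` would, for `K` large, make every superblock `K` a win for I, so II wins.
-/

namespace OmegaCubed

lemma lex2_wellFounded : WellFounded lex2 := by
  have : lex2 = InvImage (· < ·) (toLex : ℕ × ℕ → ℕ ×ₗ ℕ) := by
    ext p q
    simp [lex2, InvImage, Prod.Lex.toLex_lt_toLex]
  exact this ▸ InvImage.wf _ wellFounded_lt

lemma lex2_trans {p q r : ℕ × ℕ} (h₁ : lex2 p q) (h₂ : lex2 q r) : lex2 p r := by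
  unfold lex2 at *; omega

lemma resSeq_congr {α : Type*} {x y : ℕ → α} {n : ℕ} (h : ∀ i < n, x i = y i) :
    resSeq x n = resSeq y n :=
  congrArg List.ofFn (funext fun i => h i i.2)

lemma exists_bound_of_isOpen {ι X : Type*} [TopologicalSpace X] (f : ι → ℕ) {A : Set (ι → X)}
    (hA : IsOpen A) {x : ι → X} (hx : x ∈ A) :
    ∃ K, ∀ x' : ι → X, (∀ q, f q < K → x' q = x q) → x' ∈ A := by
  obtain ⟨I, u, hu, hsub⟩ := isOpen_pi_iff.mp hA x hx
  refine ⟨I.sup f + 1, fun x' hx' => hsub fun q hq => ?_⟩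
  rw [hx' q (Nat.lt_succ_of_le (Finset.le_sup hq))]
  exact (hu q hq).2

section Causal

variable {ι X : Type*} (r : ι → ι → Prop)

def IsCausal (F : ι → (ι → X) → X) : Prop :=
  ∀ p x x', (∀ q, r q p → x q = x' q) → F p x = F p x'

open Classical in
def causalStrat [Inhabited X] (F : ι → (ι → X) → X) : ∀ p : ι, ({q // r q p} → X) → X :=
  fun p hist => F p fun q => if h : r q p then hist ⟨q, h⟩ else default

variable {r}

lemma causalStrat_apply [Inhabited X] {F : ι → (ι → X) → X} (hF : IsCausal r F) (p : ι)
    (x : ι → X) : causalStrat r F p (fun q => x q.1) = F p x :=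
  hF _ _ _ fun _ hq => dif_pos hq

end Causal

section Play

variable {X : Type*}

def play (σ : Strat2 X) (u : ℕ × ℕ → X) : ℕ × ℕ → X :=
  lex2_wellFounded.fix fun p hist => if Odd p.2 then u p else σ p fun q => hist q.1 q.2

lemma play_eq (σ : Strat2 X) (u : ℕ × ℕ → X) (p : ℕ × ℕ) :
    play σ u p = if Odd p.2 then u p else σ p fun q => play σ u q.1 := by
  rw [play, WellFounded.fix_eq]

lemma play_of_odd (σ : Strat2 X) (u : ℕ × ℕ → X) {p : ℕ × ℕ} (hp : Odd p.2) :
    play σ u p = u p := by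
  rw [play_eq, if_pos hp]

lemma play_of_even (σ : Strat2 X) (u : ℕ × ℕ → X) {p : ℕ × ℕ} (hp : Even p.2) :
    play σ u p = σ p fun q => play σ u q.1 := by
  rw [play_eq, if_neg (Nat.not_odd_iff_even.2 hp)]

lemma play_congr (σ : Strat2 X) {u u' : ℕ × ℕ → X} (p : ℕ × ℕ)
    (h : ∀ q, (lex2 q p ∨ q = p) → Odd q.2 → u q = u' q) : play σ u p = play σ u' p := by
  induction p using lex2_wellFounded.induction with
  | _ p ih =>
    rw [play_eq, play_eq]
    split_ifs with hp
    · exact h p (Or.inr rfl) hp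
    · congr 1
      funext q
      refine ih q.1 q.2 fun r hr => h r ?_
      rcases hr with hr | rfl
      · exact Or.inl (lex2_trans hr q.2)
      · exact Or.inl q.2

end Play

section RealCoding

def realOfStrat (s : List ℕ → ℕ) : Baire := fun c => s (Denumerable.ofNat (List ℕ) c)

def stratOfReal (c : Baire) : List ℕ → ℕ := fun l => c (Encodable.encode l)

@[simp]
lemma stratOfReal_realOfStrat (s : List ℕ → ℕ) : stratOfReal (realOfStrat s) = s :=
  funext fun l => congrArg s (Denumerable.ofNat_encode l)

lemma continuous_stratOfReal_apply_resSeq (n : ℕ) :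
    Continuous fun cb : Baire × Baire => stratOfReal cb.1 (resSeq cb.2 n) := by
  have hcode : Continuous fun b : Baire => Encodable.encode (resSeq b n) :=
    (continuous_of_discreteTopology (f := fun v : Fin n → ℕ => Encodable.encode (List.ofFn v))).comp
      (continuous_pi fun i : Fin n => continuous_apply (i : ℕ))
  have heval : Continuous fun p : Baire × ℕ => p.1 p.2 :=
    continuous_prod_of_discrete_right.2 continuous_apply
  exact heval.comp (continuous_fst.prodMk (hcode.comp continuous_snd))

def FollowsI {X : Type*} (s : List X → X) (b : ℕ → X) : Prop :=
  ∀ n, b (2 * n) = s (resSeq b (2 * n))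

end RealCoding

section BlockStrat

variable {X : Type*} [Inhabited X]

/-- Block `m` of `τ` as a length-ω strategy, the earlier blocks being read off `z`. -/
def blockStrat (τ : Strat2 X) (m : ℕ) (z : ℕ × ℕ → X) : List X → X := fun l =>
  τ (m, l.length) fun q => if q.1.1 = m then l.getD q.1.2 default else z q.1

lemma blockStrat_resSeq (τ : Strat2 X) (z : ℕ × ℕ → X) (m n : ℕ) :
    blockStrat τ m z (resSeq (fun i => z (m, i)) n) = τ (m, n) fun q => z q.1 := by
  generalize hl : resSeq (fun i => z (m, i)) n = l
  obtain rfl : l.length = n := by simp [← hl, resSeq]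
  unfold blockStrat
  congr 1
  funext ⟨⟨a, i⟩, hq⟩
  split_ifs with ha
  · simp only at ha ⊢
    subst ha
    have hi : i < l.length := by unfold lex2 at hq; omega
    rw [← hl]
    simp [resSeq, List.getD_eq_getElem?_getD, hi]
  · rfl

lemma blockStrat_congr (τ : Strat2 X) (m : ℕ) {z z' : ℕ × ℕ → X}
    (h : ∀ q : ℕ × ℕ, q.1 < m → z q = z' q) : blockStrat τ m z = blockStrat τ m z' := by
  funext l
  simp only [blockStrat]
  congr 1
  funext ⟨q, hq⟩
  split_ifs with hqm
  · rfl
  · exact h q (by unfold lex2 at hq; simp only at hqm; omega)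

end BlockStrat

section Simulation

/-- In the real game simulating the superblocks after `k`, II plays at `(j, 2m+1)` block `m` of
superblock `k + 1 + j`, and I plays at `(j, 2m)` a code of his strategy for that block.
`Legal Y` says that II has respected all of these strategies. -/
def Legal (Y : (ℕ × ℕ) → Baire) : Prop :=
  ∀ j m, FollowsI (stratOfReal (Y (j, 2 * m))) (Y (j, 2 * m + 1))

def glue (k : ℕ) (x : ℕ × ℕ × ℕ → ℕ) (Y : (ℕ × ℕ) → Baire) : ℕ × ℕ × ℕ → ℕ := fun q =>
  if q.1 ≤ k then x q else Y (q.1 - (k + 1), 2 * q.2.1 + 1) q.2.2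

def splice (k : ℕ) (x : ℕ × ℕ × ℕ → ℕ) (z : ℕ × ℕ → ℕ) : ℕ × ℕ × ℕ → ℕ := fun q =>
  if q.1 = k then z q.2 else x q

def realPayoff (A : Set (ℕ × ℕ × ℕ → ℕ)) (k : ℕ) (x : ℕ × ℕ × ℕ → ℕ) :
    Set ((ℕ × ℕ) → Baire) :=
  {Y | ¬ Legal Y ∨ glue k x Y ∈ A}

def superblockPayoff (A : Set (ℕ × ℕ × ℕ → ℕ)) (k : ℕ) (x : ℕ × ℕ × ℕ → ℕ) :
    Set ((ℕ × ℕ) → ℕ) :=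
  {z | GameR2I (realPayoff A k (splice k x z))}

lemma isClosed_setOf_legal : IsClosed {Y : (ℕ × ℕ) → Baire | Legal Y} := by
  simp only [Legal, FollowsI, Set.ofPred_forall]
  refine isClosed_iInter fun j => isClosed_iInter fun m => isClosed_iInter fun n => ?_
  have hpair : Continuous fun Y : (ℕ × ℕ) → Baire => (Y (j, 2 * m), Y (j, 2 * m + 1)) := by
    fun_prop
  exact isClosed_eq (by fun_prop) ((continuous_stratOfReal_apply_resSeq _).comp hpair)

lemma continuous_glue_splice (k : ℕ) (x : ℕ × ℕ × ℕ → ℕ) :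
    Continuous fun zY : ((ℕ × ℕ) → ℕ) × ((ℕ × ℕ) → Baire) => glue k (splice k x zY.1) zY.2 := by
  refine continuous_pi fun q => ?_
  simp only [glue, splice]
  split_ifs <;> fun_prop

lemma inGameR2Sigma01_superblockPayoff {A : Set (ℕ × ℕ × ℕ → ℕ)} (hA : IsOpen A) (k : ℕ)
    (x : ℕ × ℕ × ℕ → ℕ) : InGameR2Sigma01 (superblockPayoff A k x) :=
  ⟨{zY | ¬ Legal zY.2 ∨ glue k (splice k x zY.1) zY.2 ∈ A},
    (isClosed_setOf_legal.isOpen_compl.preimage continuous_snd).union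
      (hA.preimage (continuous_glue_splice k x)), rfl⟩

lemma glue_congr {k : ℕ} {x x' : ℕ × ℕ × ℕ → ℕ} (h : ∀ q, q.1 ≤ k → x q = x' q)
    (Y : (ℕ × ℕ) → Baire) : glue k x Y = glue k x' Y := by
  funext q
  simp only [glue]
  split_ifs with hq
  exacts [h q hq, rfl]

lemma realPayoff_congr (A : Set (ℕ × ℕ × ℕ → ℕ)) {k : ℕ} {x x' : ℕ × ℕ × ℕ → ℕ}
    (h : ∀ q, q.1 ≤ k → x q = x' q) : realPayoff A k x = realPayoff A k x' := by
  simp only [realPayoff, glue_congr h]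

lemma superblockPayoff_congr (A : Set (ℕ × ℕ × ℕ → ℕ)) {k : ℕ} {x x' : ℕ × ℕ × ℕ → ℕ}
    (h : ∀ q, q.1 < k → x q = x' q) : superblockPayoff A k x = superblockPayoff A k x' := by
  ext z
  refine iff_of_eq (congrArg GameR2I (realPayoff_congr A fun q hq => ?_))
  simp only [splice]
  split_ifs with hqk
  exacts [rfl, h q (by omega)]

lemma splice_self (k : ℕ) (x : ℕ × ℕ × ℕ → ℕ) : splice k x (fun a => x (k, a)) = x := by
  funext q
  simp only [splice]
  split_ifs with h
  · rw [← h]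
  · rfl

def headSuperblock (Y : (ℕ × ℕ) → Baire) : (ℕ × ℕ) → ℕ := fun a => Y (0, 2 * a.1 + 1) a.2

def tailRun (Y : (ℕ × ℕ) → Baire) : (ℕ × ℕ) → Baire := fun a => Y (a.1 + 1, a.2)

lemma glue_splice_headSuperblock (k : ℕ) (x : ℕ × ℕ × ℕ → ℕ) (Y : (ℕ × ℕ) → Baire) :
    glue (k + 1) (splice (k + 1) x (headSuperblock Y)) (tailRun Y) = glue k x Y := by
  funext ⟨j, m, n⟩
  simp only [glue, splice, headSuperblock, tailRun]
  split_ifs <;> first | rfl | omega | (congr 2; omega)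

lemma Legal.tailRun {Y : (ℕ × ℕ) → Baire} (hY : Legal Y) : Legal (tailRun Y) :=
  fun j => hY (j + 1)

end Simulation

section Stepping

variable (A : Set (ℕ × ℕ × ℕ → ℕ)) (k : ℕ) (w : ℕ × ℕ × ℕ → ℕ) (τ : Strat2 ℕ)

/-- I's strategy in the real game after superblock `k` of `w`, built from a strategy `τ` for I in
the game on superblock `k + 1`: in the first ω-block he plays codes of the blocks of `τ`, and from
then on a winning strategy in the real game after the superblock that II's reals have spelled out. -/
def stepStrat : (ℕ × ℕ) → ((ℕ × ℕ) → Baire) → Baire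
  | (0, n), Y => realOfStrat (blockStrat τ (n / 2) (headSuperblock Y))
  | (j + 1, n), Y =>
    Classical.epsilon (WinStrat2I (realPayoff A (k + 1) (splice (k + 1) w (headSuperblock Y))))
      (j, n) fun q => tailRun Y q.1

lemma isCausal_stepStrat : IsCausal lex2 (stepStrat A k w τ) := by
  rintro ⟨_ | j, n⟩ Y Y' h
  · refine congrArg realOfStrat (blockStrat_congr τ _ fun q hq => congrFun (h _ ?_) _)
    unfold lex2; omega
  · have hhead : headSuperblock Y = headSuperblock Y' :=
      funext fun a => congrFun (h (0, _) (Or.inl j.succ_pos)) _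
    have htail : (fun q : {q // lex2 q (j, n)} => tailRun Y q.1) = fun q => tailRun Y' q.1 :=
      funext fun q => h _ (by have := q.2; unfold lex2 at this ⊢; omega)
    simp only [stepStrat, hhead, htail]

variable {A k w τ}

theorem gameR2I_realPayoff_of_winStrat2I (hτ : WinStrat2I (superblockPayoff A (k + 1) w) τ) :
    GameR2I (realPayoff A k w) := by
  refine ⟨causalStrat lex2 (stepStrat A k w τ), fun Y hY => ?_⟩
  replace hY : ∀ p : ℕ × ℕ, Even p.2 → Y p = stepStrat A k w τ p Y := fun p hp =>
    (hY p hp).trans (causalStrat_apply (isCausal_stepStrat A k w τ) p Y)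
  by_cases hlegal : Legal Y
  swap
  · exact Or.inl hlegal
  have hhead : headSuperblock Y ∈ superblockPayoff A (k + 1) w := by
    refine hτ _ fun ⟨m, n⟩ hn => ?_
    obtain ⟨i, rfl⟩ : ∃ i, n = 2 * i := hn.exists_two_nsmul n
    calc headSuperblock Y (m, 2 * i)
        = stratOfReal (Y (0, 2 * m)) (resSeq (Y (0, 2 * m + 1)) (2 * i)) := hlegal 0 m i
      _ = blockStrat τ m (headSuperblock Y) (resSeq (fun n => headSuperblock Y (m, n)) (2 * i)) := by
        rw [hY (0, 2 * m) (even_two_mul m)]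
        simp [stepStrat, headSuperblock]
      _ = τ (m, 2 * i) fun q => headSuperblock Y q.1 := blockStrat_resSeq _ _ _ _
  have htail : tailRun Y ∈ realPayoff A (k + 1) (splice (k + 1) w (headSuperblock Y)) :=
    Classical.epsilon_spec hhead _ fun p hp => hY (p.1 + 1, p.2) hp
  rcases htail with hcheat | hglue
  · exact absurd hlegal.tailRun hcheat
  · rw [glue_splice_headSuperblock] at hglue
    exact Or.inr hglue

end Stepping

section PlayerI

variable (A : Set (ℕ × ℕ × ℕ → ℕ))

def simPlay (x : ℕ × ℕ × ℕ → ℕ) : (ℕ × ℕ) → Baire :=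
  play (Classical.epsilon (WinStrat2I (realPayoff A 0 x))) fun q i => x (q.1 + 1, q.2 / 2, i)

def strat3I (τ : Strat2 ℕ) : (ℕ × ℕ × ℕ) → (ℕ × ℕ × ℕ → ℕ) → ℕ
  | (0, a), x => τ a fun q => x (0, q.1)
  | (k + 1, m, n), x => stratOfReal (simPlay A x (k, 2 * m)) (resSeq (fun i => x (k + 1, m, i)) n)

lemma isCausal_strat3I (τ : Strat2 ℕ) : IsCausal lex3 (strat3I A τ) := by
  rintro ⟨_ | k, m, n⟩ x x' h
  · exact congrArg (τ _) (funext fun q => h _ (Or.inr ⟨rfl, q.2⟩))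
  · have hsim : simPlay A x (k, 2 * m) = simPlay A x' (k, 2 * m) := by
      rw [simPlay, simPlay, realPayoff_congr A (x' := x') fun q hq => h q (Or.inl (by omega))]
      refine play_congr _ _ fun ⟨a, b⟩ hab ⟨r, hr⟩ => funext fun i => h _ ?_
      simp only [lex3, lex2, Prod.mk.injEq] at hab hr ⊢
      omega
    have hres : resSeq (fun i => x (k + 1, m, i)) n = resSeq (fun i => x' (k + 1, m, i)) n :=
      resSeq_congr fun i hi => h _ (Or.inr ⟨rfl, Or.inr ⟨rfl, hi⟩⟩)
    simp only [strat3I, hsim, hres]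

theorem exists_winStrat3I {x₀ : ℕ × ℕ × ℕ → ℕ} {τ : Strat2 ℕ}
    (hτ : WinStrat2I (superblockPayoff A 0 x₀) τ) : ∃ σ, WinStrat3I A σ := by
  refine ⟨causalStrat lex3 (strat3I A τ), fun x hx => ?_⟩
  replace hx : ∀ p : ℕ × ℕ × ℕ, Even p.2.2 → x p = strat3I A τ p x := fun p hp =>
    (hx p hp).trans (causalStrat_apply (isCausal_strat3I A τ) p x)
  have hwin : GameR2I (realPayoff A 0 x) := by
    have := hτ (fun a => x (0, a)) fun a ha => hx (0, a) ha
    rwa [superblockPayoff_congr A (x' := x) (by simp), superblockPayoff, Set.mem_ofPred_eq,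
      splice_self] at this
  have hodd : ∀ j m, simPlay A x (j, 2 * m + 1) = fun i => x (j + 1, m, i) := fun j m => by
    rw [simPlay, play_of_odd _ _ (odd_two_mul_add_one m)]
    simp only [Nat.mul_add_div two_pos, Nat.div_eq_of_lt one_lt_two, add_zero]
  have hlegal : Legal (simPlay A x) := fun j m i => by
    rw [hodd]
    exact hx (j + 1, m, 2 * i) (even_two_mul i)
  have hglue : glue 0 x (simPlay A x) = x := by
    funext ⟨j, m, n⟩
    cases j with
    | zero => rfl
    | succ j => simp [glue, hodd]
  have hY := Classical.epsilon_spec hwin (simPlay A x) fun p hp => play_of_even _ _ hp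
  rw [← hglue]
  exact hY.resolve_left (not_not.2 hlegal)

end PlayerI

section PlayerII

variable (A : Set (ℕ × ℕ × ℕ → ℕ))

def strat3II : (ℕ × ℕ × ℕ) → (ℕ × ℕ × ℕ → ℕ) → ℕ := fun p x =>
  Classical.epsilon (WinStrat2II (superblockPayoff A p.1 x)) p.2 fun q => x (p.1, q.1)

lemma isCausal_strat3II : IsCausal lex3 (strat3II A) := by
  rintro ⟨k, a⟩ x x' h
  simp only [strat3II]
  rw [superblockPayoff_congr A fun q hq => h q (Or.inl hq)]
  exact congrArg (Classical.epsilon (WinStrat2II (superblockPayoff A k x')) a)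
    (funext fun q => h _ (Or.inr ⟨rfl, q.2⟩))

variable {A}

lemma not_exists_winStrat2I_superblockPayoff
    (hdet : ∀ C : Set ((ℕ × ℕ) → ℕ), InGameR2Sigma01 C → Determined2 C) (hA : IsOpen A)
    {x₀ : ℕ × ℕ × ℕ → ℕ} (hI : ¬ ∃ σ, WinStrat2I (superblockPayoff A 0 x₀) σ)
    {x : ℕ × ℕ × ℕ → ℕ} (hx : ∀ p : ℕ × ℕ × ℕ, Odd p.2.2 → x p = strat3II A p x) (k : ℕ) :
    ¬ ∃ σ, WinStrat2I (superblockPayoff A k x) σ := by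
  induction k with
  | zero => rwa [superblockPayoff_congr A (x' := x₀) (by simp)]
  | succ k ih =>
    rintro ⟨τ, hτ⟩
    have hII : WinStrat2II (superblockPayoff A k x) (Classical.epsilon _) :=
      Classical.epsilon_spec ((hdet _ (inGameR2Sigma01_superblockPayoff hA k x)).resolve_left ih)
    apply hII (fun a => x (k, a)) fun a ha => hx (k, a) ha
    show GameR2I (realPayoff A k (splice k x fun a => x (k, a)))
    rw [splice_self]
    exact gameR2I_realPayoff_of_winStrat2I hτ

theorem exists_winStrat3II
    (hdet : ∀ C : Set ((ℕ × ℕ) → ℕ), InGameR2Sigma01 C → Determined2 C) (hA : IsOpen A)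
    {x₀ : ℕ × ℕ × ℕ → ℕ} (hI : ¬ ∃ σ, WinStrat2I (superblockPayoff A 0 x₀) σ) :
    ∃ τ, WinStrat3II A τ := by
  refine ⟨causalStrat lex3 (strat3II A), fun x hx hxA => ?_⟩
  replace hx : ∀ p : ℕ × ℕ × ℕ, Odd p.2.2 → x p = strat3II A p x := fun p hp =>
    (hx p hp).trans (causalStrat_apply (isCausal_strat3II A) p x)
  obtain ⟨K, hK⟩ := exists_bound_of_isOpen Prod.fst hA hxA
  refine not_exists_winStrat2I_superblockPayoff hdet hA hI hx K ⟨default, fun z _ => ?_⟩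
  exact ⟨default, fun Y _ => Or.inr (hK _ fun q hq => by simp [glue, splice, hq.le, hq.ne])⟩

end PlayerII

end OmegaCubed

open OmegaCubed in
/-- If all games of length ω² on ℕ with payoff in ⅁ℝ_{ω²}Σ⁰₁ are determined, then all
open games of length ω³ on ℕ are determined. -/
theorem gameClassOmegaSqDet_imp_openOmegaCubedDet
    (h : ∀ C : Set ((ℕ × ℕ) → ℕ), InGameR2Sigma01 C → Determined2 C) :
    ∀ A : Set ((ℕ × ℕ × ℕ) → ℕ), IsOpen A → Determined3 A := by
  intro A hA
  by_cases hI : ∃ τ, WinStrat2I (superblockPayoff A 0 0) τ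
  · exact Or.inl (exists_winStrat3I A hI.choose_spec)
  · exact Or.inr (exists_winStrat3II h hA hI)

end
end
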